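/- Let (T_n) be a scale, (ε_n) a controlling sequence, and R_∞ ⊆ ℕ a T-long ε-sparse tail. For every m ∈ ℕ let R_m be the union of the components of R_∞ of size T_m. Then for every m and every n ≥ 1, the density satisfies #(R_m ∩ [0, n−1]) / n < 3·ε_{m+1}. -/

import Mathlib

/-!
Cut `ℕ` into the blocks `[k T_{m+1}, (k+1) T_{m+1} - 1]`. A block lying inside a component of
`R_∞` contains no point of `R_m`, since that component is longer than `T_m`; every other block
contains fewer than `ε_{m+1} T_{m+1}` points of `R_m`, all in its middle third. So a point of
`R_m` below `n` lies in a block `k` with `(k + 1) T_{m+1} < 3 n`, and summing over the at most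
`3 n / T_{m+1}` such blocks gives fewer than `3 ε_{m+1} n` points.
-/

/-- `IsComponent R a b`: the interval of integers `[a,b]` is a maximal interval of
consecutive integers contained in `R` (a connected component of `R`). -/
def IsComponent (R : Set ℕ) (a b : ℕ) : Prop :=
  a ≤ b ∧ Set.Icc a b ⊆ R ∧ (∀ c, c + 1 = a → c ∉ R) ∧ b + 1 ∉ R

/-- The union of the components of `R` of size (cardinality) exactly `L`. -/
def compUnion (R : Set ℕ) (L : ℕ) : Set ℕ :=
  {x | ∃ a b, IsComponent R a b ∧ b + 1 - a = L ∧ x ∈ Set.Icc a b}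

/-- `R` is a `T`-long `ε`-sparse tail (see the paper's Definition of long sparse tail). -/
def IsSparseTail (T : ℕ → ℕ) (ε : ℕ → ℝ) (R : Set ℕ) : Prop :=
  (∀ a b, IsComponent R a b → ∃ k n, a = k * T n ∧ b = (k + 1) * T n - 1) ∧
  0 ∉ R ∧
  (∀ n k,
    ¬ (∃ a b, IsComponent R a b ∧
        Set.Icc (k * T (n + 1)) ((k + 1) * T (n + 1) - 1) ⊆ Set.Icc a b) →
    (compUnion R (T n) ∩ Set.Icc (k * T (n + 1)) ((k + 1) * T (n + 1) - 1)).Nonempty ∧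
    compUnion R (T n) ∩ Set.Icc (k * T (n + 1)) ((k + 1) * T (n + 1) - 1) ⊆
      Set.Icc (k * T (n + 1) + T (n + 1) / 3) ((k + 1) * T (n + 1) - 1 - T (n + 1) / 3) ∧
    ((compUnion R (T n) ∩
        Set.Icc (k * T (n + 1)) ((k + 1) * T (n + 1) - 1)).ncard : ℝ) <
      ε (n + 1) * T (n + 1))

open Set

-- The `k`-th block of length `S`, written exactly as in `IsSparseTail`.
def block (S k : ℕ) : Set ℕ := Icc (k * S) ((k + 1) * S - 1)

lemma mem_block_div {S : ℕ} (hS : 0 < S) (x : ℕ) : x ∈ block S (x / S) := by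
  have := Nat.lt_div_mul_add (a := x) hS
  have hk : (x / S + 1) * S = x / S * S + S := by ring
  exact ⟨Nat.div_mul_le_self x S, by omega⟩

lemma le_of_block_subset_Icc {S k a b : ℕ} (hS : 0 < S) (h : block S k ⊆ Icc a b) :
    S ≤ b + 1 - a := by
  have hk : k * S + S = (k + 1) * S := by ring
  rw [block, Icc_subset_Icc_iff (by omega)] at h
  omega

lemma IsComponent.eq_of_mem {R : Set ℕ} {a b a' b' x : ℕ} (h : IsComponent R a b)
    (h' : IsComponent R a' b') (hx : x ∈ Icc a b) (hx' : x ∈ Icc a' b') :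
    a = a' ∧ b = b' := by
  obtain ⟨-, hsub, hleft, hright⟩ := h
  obtain ⟨-, hsub', hleft', hright'⟩ := h'
  obtain ⟨hx1, hx2⟩ := hx
  obtain ⟨hx1', hx2'⟩ := hx'
  constructor
  · by_contra hne
    rcases Nat.lt_or_gt_of_ne hne with hlt | hgt
    · exact hleft' (a' - 1) (by omega) (hsub ⟨by omega, by omega⟩)
    · exact hleft (a - 1) (by omega) (hsub' ⟨by omega, by omega⟩)
  · by_contra hne
    rcases Nat.lt_or_gt_of_ne hne with hlt | hgt
    · exact hright (hsub' ⟨by omega, by omega⟩)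
    · exact hright' (hsub ⟨by omega, by omega⟩)

lemma compUnion_inter_eq_empty_of_subset_component {R J : Set ℕ} {L a b : ℕ}
    (hab : IsComponent R a b) (hJ : J ⊆ Icc a b) (hL : b + 1 - a ≠ L) :
    compUnion R L ∩ J = ∅ := by
  refine eq_empty_of_forall_notMem fun x ⟨⟨a', b', hab', hlen, hx'⟩, hx⟩ => hL ?_
  obtain ⟨rfl, rfl⟩ := hab.eq_of_mem hab' (hJ hx) hx'
  exact hlen

lemma ncard_inter_Iio_lt_of_block {A : Set ℕ} {S : ℕ} {c : ℝ}
    (hblock : ∀ k, ((A ∩ block S k).ncard : ℝ) < c * S) (hthird : ∀ x ∈ A, S / 3 ≤ x % S)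
    {n : ℕ} (hn : 0 < n) : ((A ∩ Iio n).ncard : ℝ) < 3 * c * n := by
  have hcS : 0 < c * S := (hblock 0).trans_le' (Nat.cast_nonneg _)
  have hS : 0 < S := Nat.pos_of_ne_zero fun h => by simp [h] at hcS
  have hc : 0 < c := pos_of_mul_pos_left hcS (Nat.cast_nonneg _)
  have hKS : (3 * n - 1) / S * S < 3 * n :=
    (Nat.div_mul_le_self _ S).trans_lt (by omega)
  set K := (3 * n - 1) / S
  have hcover : A ∩ Iio n ⊆ ⋃ k ∈ Finset.range K, A ∩ block S k := by
    rintro x ⟨hxA, hxn⟩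
    have hdiv := Nat.div_add_mod x S
    have hthird' := hthird x hxA
    -- the point `x` sits in the last two thirds of its block, so that block ends before `3 n`
    have hend : (x / S + 1) * S < 3 * n := by
      have : S ≤ 3 * (S / 3) + 2 := by omega
      have : x < n := hxn
      have : (x / S + 1) * S = S * (x / S) + S := by ring
      linarith [Nat.zero_le (S * (x / S))]
    have hlt : x / S < K := (Nat.le_div_iff_mul_le hS).2 (Nat.le_sub_one_of_lt hend)
    exact mem_biUnion (Finset.mem_coe.2 (Finset.mem_range.2 hlt)) ⟨hxA, mem_block_div hS x⟩
  have hfin : (⋃ k ∈ Finset.range K, A ∩ block S k).Finite :=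
    (Finset.range K).finite_toSet.biUnion fun k _ => (finite_Icc _ _).subset inter_subset_right
  calc ((A ∩ Iio n).ncard : ℝ)
      ≤ ∑ k ∈ Finset.range K, ((A ∩ block S k).ncard : ℝ) := by
        exact_mod_cast (ncard_le_ncard hcover hfin).trans
          ((Finset.range K).set_ncard_biUnion_le _)
    _ ≤ ∑ _k ∈ Finset.range K, c * S :=
        Finset.sum_le_sum fun k _ => (hblock k).le
    _ = c * (K * S : ℕ) := by
        rw [Finset.sum_const, Finset.card_range, nsmul_eq_mul]; push_cast; ring
    _ < 3 * c * n := by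
        have : ((K * S : ℕ) : ℝ) < 3 * n := by exact_mod_cast hKS
        nlinarith

namespace IsSparseTail

variable {T : ℕ → ℕ} {ε : ℕ → ℝ} {R : Set ℕ} {m : ℕ}

lemma compUnion_inter_block_eq_empty (hTm : T m < T (m + 1)) {k : ℕ}
    (hk : ∃ a b, IsComponent R a b ∧ block (T (m + 1)) k ⊆ Icc a b) :
    compUnion R (T m) ∩ block (T (m + 1)) k = ∅ := by
  obtain ⟨a, b, hab, hsub⟩ := hk
  have := le_of_block_subset_Icc (hTm.trans_le' (Nat.zero_le _)) hsub
  exact compUnion_inter_eq_empty_of_subset_component hab hsub (by omega)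

lemma ncard_compUnion_inter_block_lt (hR : IsSparseTail T ε R) (hTm : T m < T (m + 1))
    (hε : 0 < ε (m + 1)) (k : ℕ) :
    ((compUnion R (T m) ∩ block (T (m + 1)) k).ncard : ℝ) < ε (m + 1) * T (m + 1) := by
  by_cases hk : ∃ a b, IsComponent R a b ∧ block (T (m + 1)) k ⊆ Icc a b
  · rw [compUnion_inter_block_eq_empty hTm hk, ncard_empty, Nat.cast_zero]
    have : (0 : ℝ) < T (m + 1) := by exact_mod_cast hTm.trans_le' (Nat.zero_le _)
    positivity
  · exact (hR.2.2 m k hk).2.2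

lemma div_three_le_mod_of_mem_compUnion (hR : IsSparseTail T ε R) (hTm : T m < T (m + 1))
    {x : ℕ} (hx : x ∈ compUnion R (T m)) : T (m + 1) / 3 ≤ x % T (m + 1) := by
  have hS : 0 < T (m + 1) := hTm.trans_le' (Nat.zero_le _)
  have hxk : x ∈ compUnion R (T m) ∩ block (T (m + 1)) (x / T (m + 1)) :=
    ⟨hx, mem_block_div hS x⟩
  have hk : ¬ ∃ a b, IsComponent R a b ∧ block (T (m + 1)) (x / T (m + 1)) ⊆ Icc a b :=
    fun hk => by simp [compUnion_inter_block_eq_empty hTm hk] at hxk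
  have hmid := ((hR.2.2 m _ hk).2.1 hxk).1
  have := Nat.div_add_mod x (T (m + 1))
  rw [mul_comm] at this
  omega

end IsSparseTail

theorem stmt4_general (T κ : ℕ → ℕ) (hT0 : ∀ n, 0 < T n)
    (hκ3 : ∀ n, 3 ≤ κ n)
    (hTκ : ∀ n, T (n + 1) = κ (n + 1) * T n)
    (ε : ℕ → ℝ) (hεpos : ∀ n, 0 < ε n)
    (R : Set ℕ) (hR : IsSparseTail T ε R) :
    ∀ m : ℕ, ∀ n : ℕ, 1 ≤ n →
      ((compUnion R (T m) ∩ Set.Iio n).ncard : ℝ) / n < 3 * ε (m + 1) := by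
  intro m n hn
  have hTm : T m < T (m + 1) := by
    rw [hTκ m]
    nlinarith [hκ3 (m + 1), hT0 m]
  rw [div_lt_iff₀ (by exact_mod_cast hn)]
  exact ncard_inter_Iio_lt_of_block (hR.ncard_compUnion_inter_block_lt hTm (hεpos _))
    (fun x hx => hR.div_three_le_mod_of_mem_compUnion hTm hx) hn

/-- density estimate for sparse tails: for every `m` and every `n ≥ 1`,
`#(R_m ∩ [0, n−1]) / n < 3 ε_{m+1}`, where `R_m` is the union of the components of the
tail of size `T m`. -/
theorem stmt4 (T κ : ℕ → ℕ) (hT0 : ∀ n, 0 < T n)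
    (hκ3 : ∀ n, 3 ≤ κ n)
    (hTκ : ∀ n, T (n + 1) = κ (n + 1) * T n)
    (ε : ℕ → ℝ) (hεpos : ∀ n, 0 < ε n) (hεsum : Summable ε)
    (R : Set ℕ) (hR : IsSparseTail T ε R) :
    ∀ m : ℕ, ∀ n : ℕ, 1 ≤ n →
      ((compUnion R (T m) ∩ Set.Iio n).ncard : ℝ) / n < 3 * ε (m + 1) :=
  stmt4_general T κ hT0 hκ3 hTκ ε hεpos R hR
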